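/- Let A ∈ 𝒞 with A i = (X i)† ∘ (X i) for all i, and let Π i denote the orthogonal projection onto the range of X i. Then A admits a nonzero perturbation if and only if there exists a nonzero family Q : I → (H →L[ℂ] H) with each Q i self-adjoint and Q i = Π i ∘ Q i ∘ Π i, such that Σ_{i ∈ I} Tr[(X i ∘ C ∘ (X i)†) ∘ Q i] = 0 for every C in the commutant of U. -/

import Mathlib

open ContinuousLinearMap

set_option linter.unusedSectionVars false
set_option maxHeartbeats 1000000

/-- The linear map `L(A) = (1/|G|) · Σ_{i ∈ I} Σ_{g ∈ G} (U g) ∘ (A i) ∘ (U g)†`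
associated to a family of operators `A : I → (H →L[ℂ] H)`. -/
noncomputable def Lmap {H : Type*} [NormedAddCommGroup H] [InnerProductSpace ℂ H]
    [FiniteDimensional ℂ H] {G : Type*} [Group G] [Fintype G] {I : Type*} [Fintype I]
    (U : G → (H →L[ℂ] H)) (A : I → (H →L[ℂ] H)) : H →L[ℂ] H :=
  (Fintype.card G : ℂ)⁻¹ •
    ∑ i : I, ∑ g : G, U g ∘L A i ∘L ContinuousLinearMap.adjoint (U g)

/-- The convex set `𝒞` of block operators corresponding to covariant POVMs with
outcome space `I × G`: families `A` with every `A i` positive semidefinite and `L(A) = 1`. -/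
def covSet {H : Type*} [NormedAddCommGroup H] [InnerProductSpace ℂ H]
    [FiniteDimensional ℂ H] {G : Type*} [Group G] [Fintype G] {I : Type*} [Fintype I]
    (U : G → (H →L[ℂ] H)) : Set (I → (H →L[ℂ] H)) :=
  {A | (∀ i, (A i).IsPositive) ∧ Lmap U A = 1}

section Helpers

variable {H : Type*} [NormedAddCommGroup H] [InnerProductSpace ℂ H] [FiniteDimensional ℂ H]

local notation "⟪" x ", " y "⟫" => @inner ℂ _ _ x y

private lemma clm_eq_zero_of_inner {T : H →L[ℂ] H} (h : ∀ x y : H, ⟪x, T y⟫ = 0) : T = 0 := by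
  ext y
  have := h (T y) y
  simpa [inner_self_eq_zero] using this

private lemma trace_eq_sum_inner (b : OrthonormalBasis (Fin (Module.finrank ℂ H)) ℂ H)
    (T : H →L[ℂ] H) :
    LinearMap.trace ℂ H (T : H →ₗ[ℂ] H) = ∑ i, ⟪b i, T (b i)⟫ := by
  rw [LinearMap.trace_eq_matrix_trace ℂ b.toBasis, Matrix.trace]
  congr 1
  ext i
  rw [Matrix.diag_apply, LinearMap.toMatrix_apply]
  simp [OrthonormalBasis.coe_toBasis, OrthonormalBasis.coe_toBasis_repr_apply,
    b.repr_apply_apply]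

private lemma eq_zero_of_trace_adjoint_comp_self {T : H →L[ℂ] H}
    (h : LinearMap.trace ℂ H ((adjoint T ∘L T : H →L[ℂ] H) : H →ₗ[ℂ] H) = 0) : T = 0 := by
  set b := stdOrthonormalBasis ℂ H
  rw [trace_eq_sum_inner b] at h
  have h' : ∀ i, T (b i) = 0 := by
    have hre : ∑ i, (‖T (b i)‖ : ℝ) ^ 2 = 0 := by
      have := congrArg Complex.re h
      simpa [comp_apply, adjoint_inner_right, inner_self_eq_norm_sq_to_K,
        ← Complex.ofReal_pow] using this
    intro i
    have := (Finset.sum_eq_zero_iff_of_nonneg (fun i _ => sq_nonneg ‖T (b i)‖)).mp hre i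
      (Finset.mem_univ i)
    simpa [pow_eq_zero_iff] using this
  apply ContinuousLinearMap.coe_injective
  apply b.toBasis.ext
  intro i
  simpa using h' i

private lemma IsPositive.apply_eq_zero {B : H →L[ℂ] H} (hB : B.IsPositive) {x : H}
    (hx : Complex.re ⟪B x, x⟫ = 0) : B x = 0 := by
  by_contra hne
  set n : ℝ := ‖B x‖ ^ 2 with hn
  have hnorm : 0 < n := by
    have : 0 < ‖B x‖ := norm_pos_iff.mpr hne
    positivity
  set c : ℝ := Complex.re ⟪B (B x), B x⟫ with hc
  have hc0 : 0 ≤ c := hB.2 (B x)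
  have hcpos : (0:ℝ) < c + 1 := by linarith
  set t : ℝ := -n / (c + 1) with ht
  have htc : t * (c + 1) = -n := by
    rw [ht]; field_simp
  have key : 0 ≤ B.reApplyInnerSelf (x + t • B x) := hB.2 _
  have hBsa := hB.1
  have hexp : B.reApplyInnerSelf (x + t • B x) = 2 * t * n + t ^ 2 * c := by
    have h1 : ⟪B (B x), x⟫ = ⟪B x, B x⟫ := hBsa (B x) x
    rw [reApplyInnerSelf, map_add, B.map_smul_of_tower]
    simp only [inner_add_left, inner_add_right]
    simp only [RCLike.real_smul_eq_coe_smul (K := ℂ), inner_smul_left, inner_smul_right,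
      RCLike.conj_ofReal, h1, inner_self_eq_norm_sq_to_K, ← RCLike.ofReal_pow]
    simp only [map_add, RCLike.mul_re, RCLike.ofReal_re, RCLike.ofReal_im]
    simp only [RCLike.re_to_complex, RCLike.im_to_complex, hx, ← hc, ← hn]
    ring
  rw [hexp] at key
  have key2 : 0 ≤ (2 * t * n + t ^ 2 * c) * (c + 1) ^ 2 :=
    mul_nonneg key (sq_nonneg _)
  have expand : (2 * t * n + t ^ 2 * c) * (c + 1) ^ 2
      = 2 * (t * (c + 1)) * n * (c + 1) + (t * (c + 1)) ^ 2 * c := by ring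
  rw [expand, htc] at key2
  nlinarith [key2, hnorm, hc0]

private lemma orth_mem_ker {T : H →L[ℂ] H} (hT : IsSelfAdjoint T) {u : H}
    (hu : u ∈ (LinearMap.range (T : H →ₗ[ℂ] H))ᗮ) : T u = 0 := by
  have h2 : ⟪T u, T u⟫ = 0 := by
    have hsym := hT.isSymmetric (T u) u
    simp only [ContinuousLinearMap.coe_coe] at hsym
    rw [← hsym]
    exact (Submodule.mem_orthogonal _ _).mp hu (T (T u)) ⟨T u, rfl⟩
  exact inner_self_eq_zero.mp h2

private lemma exists_pinv (T : H →L[ℂ] H) (hT : IsSelfAdjoint T) :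
    ∃ B : H →L[ℂ] H, IsSelfAdjoint B ∧
      B ∘L T = (LinearMap.range (T : H →ₗ[ℂ] H)).subtypeL ∘L Submodule.orthogonalProjectionOnto (LinearMap.range (T : H →ₗ[ℂ] H)) ∧
      T ∘L B = (LinearMap.range (T : H →ₗ[ℂ] H)).subtypeL ∘L Submodule.orthogonalProjectionOnto (LinearMap.range (T : H →ₗ[ℂ] H)) := by
  set N := LinearMap.range (T : H →ₗ[ℂ] H) with hN
  have hmem : ∀ x : H, T x ∈ N := fun x => LinearMap.mem_range_self _ x
  set e : N →ₗ[ℂ] N := (T : H →ₗ[ℂ] H).restrict (fun x _ => hmem x) with he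
  have he_apply : ∀ x : N, ((e x : H)) = T (x : H) := fun x => rfl
  have hinj : Function.Injective e := by
    apply (injective_iff_map_eq_zero e).mpr
    rintro ⟨x, hx⟩ h0
    have hTx : T x = 0 := by
      have := congrArg (Subtype.val : N → H) h0
      simpa [he_apply] using this
    obtain ⟨z, hz⟩ := hx
    have hz0 : ⟪x, x⟫ = 0 := by
      have hsym := hT.isSymmetric z x
      simp only [ContinuousLinearMap.coe_coe] at hsym
      calc ⟪x, x⟫ = ⟪T z, x⟫ := by rw [← ContinuousLinearMap.coe_coe T, hz]
        _ = ⟪z, T x⟫ := hsym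
        _ = 0 := by rw [hTx, inner_zero_right]
    ext
    simpa [inner_self_eq_zero] using hz0
  have hsurj : Function.Surjective e := (LinearMap.injective_iff_surjective).mp hinj
  set eqv := LinearEquiv.ofBijective e ⟨hinj, hsurj⟩ with heqv
  have heqv_apply : ∀ x : N, eqv x = e x := fun x => rfl
  set B : H →L[ℂ] H := LinearMap.toContinuousLinearMap
    (N.subtype ∘ₗ (eqv.symm.toLinearMap) ∘ₗ
      ((Submodule.orthogonalProjectionOnto N : H →L[ℂ] N) : H →ₗ[ℂ] N)) with hB
  have hB_apply : ∀ x : H, B x = ((eqv.symm (Submodule.orthogonalProjectionOnto N x) : N) : H) :=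
    fun x => rfl
  have hker : ∀ x : H, T x = T ((Submodule.orthogonalProjectionOnto N x : N) : H) := by
    intro x
    have h0 : T (x - ((Submodule.orthogonalProjectionOnto N x : N) : H)) = 0 :=
      orth_mem_ker hT (Submodule.sub_starProjection_mem_orthogonal (K := N) x)
    rw [map_sub] at h0
    linear_combination (norm := abel) h0
  have hBT : ∀ x : H, B (T x) = ((Submodule.orthogonalProjectionOnto N x : N) : H) := by
    intro x
    rw [hB_apply]
    have hproj : Submodule.orthogonalProjectionOnto N (T x) = ⟨T x, hmem x⟩ :=
      Submodule.orthogonalProjectionOnto_mem_subspace_eq_self (⟨T x, hmem x⟩ : N)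
    rw [hproj]
    congr 1
    rw [LinearEquiv.symm_apply_eq]
    ext
    rw [heqv_apply, he_apply]
    show T x = T _
    exact hker x
  have hTB : ∀ x : H, T (B x) = ((Submodule.orthogonalProjectionOnto N x : N) : H) := by
    intro x
    rw [hB_apply]
    have h1 := he_apply (eqv.symm (Submodule.orthogonalProjectionOnto N x))
    rw [← h1]
    congr 1
    rw [← heqv_apply]
    exact eqv.apply_symm_apply _
  refine ⟨B, ?_, ?_, ?_⟩
  · rw [ContinuousLinearMap.isSelfAdjoint_iff']
    symm
    rw [ContinuousLinearMap.eq_adjoint_iff]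
    intro x y
    set u := eqv.symm (Submodule.orthogonalProjectionOnto N x) with hu
    set v := eqv.symm (Submodule.orthogonalProjectionOnto N y) with hv
    have hBx : B x = (u : H) := hB_apply x
    have hBy : B y = (v : H) := hB_apply y
    have hTu : T (u : H) = ((Submodule.orthogonalProjectionOnto N x : N) : H) := by
      rw [← hBx]; exact hTB x
    have hTv : T (v : H) = ((Submodule.orthogonalProjectionOnto N y : N) : H) := by
      rw [← hBy]; exact hTB y
    have step1 : ⟪B x, y⟫ = ⟪(u : H), ((Submodule.orthogonalProjectionOnto N y : N) : H)⟫ := by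
      rw [hBx]
      have horth : ⟪(u : H), y - ((Submodule.orthogonalProjectionOnto N y : N) : H)⟫ = 0 :=
        Submodule.inner_right_of_mem_orthogonal u.2
          (Submodule.sub_starProjection_mem_orthogonal (K := N) y)
      rw [inner_sub_right, sub_eq_zero] at horth
      exact horth
    have step2 : ⟪x, B y⟫ = ⟪((Submodule.orthogonalProjectionOnto N x : N) : H), (v : H)⟫ := by
      rw [hBy]
      have horth : ⟪x - ((Submodule.orthogonalProjectionOnto N x : N) : H), (v : H)⟫ = 0 :=
        Submodule.inner_left_of_mem_orthogonal v.2
          (Submodule.sub_starProjection_mem_orthogonal (K := N) x)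
      rw [inner_sub_left, sub_eq_zero] at horth
      exact horth
    rw [step1, step2, ← hTv, ← hTu]
    have hsym := hT.isSymmetric (u : H) (v : H)
    simpa using hsym.symm
  · ext x
    simp only [ContinuousLinearMap.comp_apply, Submodule.subtypeL_apply]
    exact hBT x
  · ext x
    simp only [ContinuousLinearMap.comp_apply, Submodule.subtypeL_apply]
    exact hTB x

end Helpers
section LmapLemmas

variable {H : Type*} [NormedAddCommGroup H] [InnerProductSpace ℂ H] [FiniteDimensional ℂ H]
  {G : Type*} [Group G] [Fintype G] {I : Type*} [Fintype I]
  (U : G → (H →L[ℂ] H))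

private lemma Lmap_add (A P : I → (H →L[ℂ] H)) :
    Lmap U (A + P) = Lmap U A + Lmap U P := by
  unfold Lmap
  rw [← smul_add, ← Finset.sum_add_distrib]
  congr 1
  apply Finset.sum_congr rfl
  intro i _
  rw [← Finset.sum_add_distrib]
  apply Finset.sum_congr rfl
  intro g _
  simp only [Pi.add_apply, add_comp, comp_add]

private lemma Lmap_real_smul (t : ℝ) (P : I → (H →L[ℂ] H)) :
    Lmap U (t • P) = t • Lmap U P := by
  unfold Lmap
  simp only [Pi.smul_apply, RCLike.real_smul_eq_coe_smul (K := ℂ)]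
  rw [smul_comm]
  congr 1
  rw [Finset.smul_sum]
  apply Finset.sum_congr rfl
  intro i _
  rw [Finset.smul_sum]
  apply Finset.sum_congr rfl
  intro g _
  rw [smul_comp, comp_smul]

private lemma Lmap_selfAdjoint (P : I → (H →L[ℂ] H)) (hP : ∀ i, IsSelfAdjoint (P i)) :
    IsSelfAdjoint (Lmap U P) := by
  unfold Lmap
  rw [IsSelfAdjoint, star_smul, star_sum]
  congr 1
  · simp
  · apply Finset.sum_congr rfl
    intro i _
    rw [star_sum]
    apply Finset.sum_congr rfl
    intro g _
    simp only [star_eq_adjoint, adjoint_comp, adjoint_adjoint, (hP i).adjoint_eq, comp_assoc]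

private lemma Lmap_commute (hU2 : ∀ g, ContinuousLinearMap.adjoint (U g) ∘L U g = 1)
    (hUm : ∀ g h, U (g * h) = U g ∘L U h)
    (P : I → (H →L[ℂ] H)) (h : G) :
    U h ∘L Lmap U P = Lmap U P ∘L U h := by
  have key : ∀ i g, U h ∘L (U g ∘L P i ∘L ContinuousLinearMap.adjoint (U g)) =
      (U (h*g) ∘L P i ∘L ContinuousLinearMap.adjoint (U (h*g))) ∘L U h := by
    intro i g
    ext x
    have h1 : ContinuousLinearMap.adjoint (U (h*g)) (U h x) =
        ContinuousLinearMap.adjoint (U g) x := by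
      rw [hUm, adjoint_comp]
      simp only [comp_apply]
      congr 1
      have := congrFun (congrArg DFunLike.coe (hU2 h)) x
      simpa using this
    simp only [comp_apply]
    rw [h1]
    simp only [hUm, comp_apply]
  unfold Lmap
  rw [comp_smul, smul_comp]
  congr 1
  rw [ContinuousLinearMap.comp_finset_sum, ContinuousLinearMap.finset_sum_comp]
  apply Finset.sum_congr rfl
  intro i _
  rw [ContinuousLinearMap.comp_finset_sum, ContinuousLinearMap.finset_sum_comp]
  exact Fintype.sum_equiv (Equiv.mulLeft h) _ _ (fun g => by
    rw [key i g]; rfl)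

private lemma trace_comp_Lmap (hU2 : ∀ g, ContinuousLinearMap.adjoint (U g) ∘L U g = 1)
    (P : I → (H →L[ℂ] H)) (C : H →L[ℂ] H)
    (hC : ∀ g, C ∘L U g = U g ∘L C) :
    LinearMap.trace ℂ H ((C ∘L Lmap U P : H →L[ℂ] H) : H →ₗ[ℂ] H)
      = ∑ i, LinearMap.trace ℂ H ((C ∘L P i : H →L[ℂ] H) : H →ₗ[ℂ] H) := by
  have key : ∀ (i : I) (g : G),
      LinearMap.trace ℂ H
        ((C ∘L (U g ∘L P i ∘L ContinuousLinearMap.adjoint (U g)) : H →L[ℂ] H) : H →ₗ[ℂ] H)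
      = LinearMap.trace ℂ H ((C ∘L P i : H →L[ℂ] H) : H →ₗ[ℂ] H) := by
    intro i g
    have h1 : (C ∘L (U g ∘L P i ∘L ContinuousLinearMap.adjoint (U g)) : H →L[ℂ] H)
        = (C ∘L U g ∘L P i) ∘L ContinuousLinearMap.adjoint (U g) := by
      simp only [comp_assoc]
    rw [h1, toLinearMap_comp, LinearMap.trace_comp_comm']
    have h2 : (((ContinuousLinearMap.adjoint (U g) : H →L[ℂ] H)) : H →ₗ[ℂ] H) ∘ₗ
        ((C ∘L U g ∘L P i : H →L[ℂ] H) : H →ₗ[ℂ] H)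
        = ((ContinuousLinearMap.adjoint (U g) ∘L (C ∘L U g ∘L P i) : H →L[ℂ] H) : H →ₗ[ℂ] H) :=
      rfl
    rw [h2]
    congr 2
    ext x
    simp only [comp_apply]
    have hc1 := congrFun (congrArg DFunLike.coe (hC g)) (P i x)
    simp only [comp_apply] at hc1
    rw [hc1]
    have hc2 := congrFun (congrArg DFunLike.coe (hU2 g)) (C (P i x))
    simpa using hc2
  unfold Lmap
  simp only [comp_smul, ContinuousLinearMap.comp_finset_sum, toLinearMap_smul, toLinearMap_sum,
    map_smul, map_sum, key]
  simp only [Finset.sum_const, Finset.card_univ, ← Nat.cast_smul_eq_nsmul (R := ℂ), smul_smul,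
    ← Finset.sum_smul]
  rw [Finset.smul_sum]
  have hcard : ((Fintype.card G : ℂ)) ≠ 0 :=
    Nat.cast_ne_zero.mpr (Fintype.card_ne_zero (α := G))
  simp [smul_smul, inv_mul_cancel₀ hcard]

end LmapLemmas

section MainAux

variable {H : Type*} [NormedAddCommGroup H] [InnerProductSpace ℂ H] [FiniteDimensional ℂ H]

private lemma real_smul_selfAdjoint (s : ℝ) {T : H →L[ℂ] H} (hT : IsSelfAdjoint T) :
    IsSelfAdjoint (s • T) := by
  rw [IsSelfAdjoint, RCLike.real_smul_eq_coe_smul (K := ℂ), star_smul, RCLike.star_def,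
    RCLike.conj_ofReal, hT.star_eq]

end MainAux

/-- Let `A ∈ 𝒞` with `A i = (X i)† ∘ (X i)`, and let `Pj i` be the orthogonal projection onto
the range of `X i`. Then `A` admits a nonzero perturbation if and only if there is a nonzero
family `Q` of self-adjoint operators supported on the ranges (`Q i = Pj i ∘ Q i ∘ Pj i`) with
`Σ_i Tr[(X i ∘ C ∘ (X i)†) ∘ Q i] = 0` for every `C` in the commutant of `U`. -/
theorem exists_nonzero_perturbation_iff
    {H : Type*} [NormedAddCommGroup H] [InnerProductSpace ℂ H] [FiniteDimensional ℂ H]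
    [Nontrivial H]
    {G : Type*} [Group G] [Fintype G] {I : Type*} [Fintype I] [Nonempty I]
    (U : G → (H →L[ℂ] H))
    (hU1 : ∀ g, U g ∘L ContinuousLinearMap.adjoint (U g) = 1)
    (hU2 : ∀ g, ContinuousLinearMap.adjoint (U g) ∘L U g = 1)
    (hUm : ∀ g h, U (g * h) = U g ∘L U h)
    (A X Pj : I → (H →L[ℂ] H)) (hA : A ∈ covSet U)
    (hAX : ∀ i, A i = ContinuousLinearMap.adjoint (X i) ∘L X i)
    (hPj : ∀ i, Pj i =
      (LinearMap.range (X i : H →ₗ[ℂ] H)).subtypeL ∘L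
        Submodule.orthogonalProjectionOnto (LinearMap.range (X i : H →ₗ[ℂ] H))) :
    (∃ P : I → (H →L[ℂ] H), P ≠ 0 ∧ (∀ i, IsSelfAdjoint (P i)) ∧
        ∃ ε > (0 : ℝ), ∀ t ∈ Set.Icc (-ε) ε, A + t • P ∈ covSet U) ↔
      (∃ Q : I → (H →L[ℂ] H), Q ≠ 0 ∧
        (∀ i, IsSelfAdjoint (Q i) ∧ Q i = Pj i ∘L Q i ∘L Pj i) ∧
        ∀ C : H →L[ℂ] H, (∀ g, C ∘L U g = U g ∘L C) →
          ∑ i, LinearMap.trace ℂ H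
            (((X i ∘L C ∘L ContinuousLinearMap.adjoint (X i)) ∘L Q i : H →L[ℂ] H) :
              H →ₗ[ℂ] H) = 0) := by
  obtain ⟨hApos, hALmap⟩ := hA
  have hPjsa : ∀ i, IsSelfAdjoint (Pj i) := fun i => by
    rw [hPj]; exact isSelfAdjoint_starProjection _
  constructor
  · -- Forward direction
    rintro ⟨P, hPne, hPsa, ε, hε, hmem⟩
    have hmemp := hmem ε (Set.mem_Icc.mpr ⟨by linarith, le_refl ε⟩)
    have hmemm := hmem (-ε) (Set.mem_Icc.mpr ⟨le_refl _, by linarith⟩)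
    have hLP : Lmap U P = 0 := by
      have h1 : Lmap U (A + ε • P) = 1 := hmemp.2
      rw [Lmap_add, Lmap_real_smul, hALmap, add_eq_left] at h1
      have := congrArg (fun T => ε⁻¹ • T) h1
      simpa [smul_smul, inv_mul_cancel₀ (ne_of_gt hε)] using this
    have hker : ∀ i x, X i x = 0 → P i x = 0 := by
      intro i x hx
      have hAx : A i x = 0 := by
        rw [hAX]
        simp only [ContinuousLinearMap.comp_apply, hx, map_zero]
      have hposp : ((A + ε • P) i).IsPositive := hmemp.1 i
      have hposm : ((A + (-ε) • P) i).IsPositive := hmemm.1 i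
      have happp : ((A + ε • P) i) x = ε • P i x := by
        simp [Pi.add_apply, Pi.smul_apply, hAx]
      have happm : ((A + (-ε) • P) i) x = (-ε) • P i x := by
        simp [Pi.add_apply, Pi.smul_apply, hAx]
      have hre_smul : ∀ (s : ℝ) (v : H),
          Complex.re (inner ℂ ((s • v : H)) x) = s * Complex.re (inner (𝕜 := ℂ) v x) := by
        intro s v
        rw [RCLike.real_smul_eq_coe_smul (K := ℂ), inner_smul_left, RCLike.conj_ofReal]
        simp
      set r : ℝ := Complex.re (inner (𝕜 := ℂ) (P i x) x) with hr
      have rp : 0 ≤ ε * r := by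
        have h := hposp.2 x
        rw [ContinuousLinearMap.reApplyInnerSelf, happp] at h
        rwa [show RCLike.re (inner (𝕜 := ℂ) (ε • P i x) x)
          = ε * r from hre_smul ε (P i x)] at h
      have rm : 0 ≤ (-ε) * r := by
        have h := hposm.2 x
        rw [ContinuousLinearMap.reApplyInnerSelf, happm] at h
        rwa [show RCLike.re (inner (𝕜 := ℂ) ((-ε) • P i x) x)
          = (-ε) * r from hre_smul (-ε) (P i x)] at h
      have hr0 : r = 0 := by nlinarith
      have h0 : ((A + ε • P) i) x = 0 := by
        apply IsPositive.apply_eq_zero hposp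
        rw [happp, hre_smul ε (P i x), ← hr, hr0, mul_zero]
      rw [happp] at h0
      have := congrArg (fun v => ε⁻¹ • v) h0
      simpa [smul_smul, inv_mul_cancel₀ (ne_of_gt hε)] using this
    -- pseudoinverses
    choose B hBsa hBA hAB using fun i => exists_pinv (A i) (hApos i).isSelfAdjoint
    set Pr : I → (H →L[ℂ] H) := fun i =>
      (LinearMap.range (A i : H →ₗ[ℂ] H)).subtypeL ∘L
          Submodule.orthogonalProjectionOnto (LinearMap.range (A i : H →ₗ[ℂ] H))
      with hPrdef
    have hPrsa : ∀ i, IsSelfAdjoint (Pr i) := fun i =>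
      isSelfAdjoint_starProjection _
    have hPr_apply : ∀ i (w : H),
        Pr i w = ((Submodule.orthogonalProjectionOnto (LinearMap.range (A i : H →ₗ[ℂ] H)) w :
          LinearMap.range (A i : H →ₗ[ℂ] H)) : H) := fun i w => rfl
    have horthker : ∀ i (u : H), u ∈ (LinearMap.range (A i : H →ₗ[ℂ] H))ᗮ → P i u = 0 := by
      intro i u hu
      have hAu : A i u = 0 := orth_mem_ker (hApos i).isSelfAdjoint hu
      have hcoe : ContinuousLinearMap.adjoint (X i) (X i u) = A i u := by
        rw [hAX]; rfl
      have h2 : inner (𝕜 := ℂ) (X i u) (X i u) = 0 := by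
        rw [← ContinuousLinearMap.adjoint_inner_right (X i) u (X i u), hcoe, hAu,
          inner_zero_right]
      exact hker i u (inner_self_eq_zero.mp h2)
    have e4 : ∀ i (w : H), P i (Pr i w) = P i w := by
      intro i w
      have h0 : P i (w - Pr i w) = 0 := by
        rw [hPr_apply]
        exact horthker i _
            (Submodule.sub_starProjection_mem_orthogonal (K := LinearMap.range (A i : H →ₗ[ℂ] H)) w)
      rw [map_sub, sub_eq_zero] at h0
      exact h0.symm
    have hPPr_op : ∀ i, P i ∘L Pr i = P i := by
      intro i; ext w
      simp only [ContinuousLinearMap.comp_apply]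
      exact e4 i w
    have hPrP_op : ∀ i, Pr i ∘L P i = P i := by
      intro i
      have := congrArg ContinuousLinearMap.adjoint (hPPr_op i)
      rwa [ContinuousLinearMap.adjoint_comp, (hPsa i).adjoint_eq, (hPrsa i).adjoint_eq]
        at this
    have e5 : ∀ i (w : H), Pr i (P i w) = P i w := by
      intro i w
      have := congrFun (congrArg DFunLike.coe (hPrP_op i)) w
      simpa [ContinuousLinearMap.comp_apply] using this
    set Q : I → (H →L[ℂ] H) := fun i =>
      (X i ∘L B i) ∘L P i ∘L ContinuousLinearMap.adjoint (X i ∘L B i) with hQdef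
    have hQsa : ∀ i, IsSelfAdjoint (Q i) := fun i => (hPsa i).conj_adjoint (X i ∘L B i)
    have e1 : ∀ i (w : H), ContinuousLinearMap.adjoint (X i) (X i w) = A i w :=
      fun i w => by rw [hAX]; rfl
    have e2 : ∀ i (w : H), B i (A i w) = Pr i w := by
      intro i w
      have := congrFun (congrArg DFunLike.coe (hBA i)) w
      exact this
    have e3 : ∀ i (w : H), A i (B i w) = Pr i w := by
      intro i w
      have := congrFun (congrArg DFunLike.coe (hAB i)) w
      exact this
    have hXQX : ∀ i, ContinuousLinearMap.adjoint (X i) ∘L Q i ∘L X i = P i := by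
      intro i
      ext z
      simp only [hQdef, ContinuousLinearMap.comp_apply, ContinuousLinearMap.adjoint_comp,
        (hBsa i).adjoint_eq]
      rw [e1 i z, e2 i z, e4 i z, e1 i (B i (P i z)), e3 i (P i z), e5 i z]
    refine ⟨Q, ?_, ?_, ?_⟩
    · -- Q ≠ 0
      intro h0
      apply hPne
      funext i
      have hQi : Q i = 0 := by rw [h0]; rfl
      rw [← hXQX i, hQi]
      simp
    · -- self-adjoint and support
      intro i
      refine ⟨hQsa i, ?_⟩
      have hPjX : ∀ w, Pj i (X i w) = X i w := by
        intro w
        rw [hPj]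
        simp only [ContinuousLinearMap.comp_apply, Submodule.subtypeL_apply]
        exact Submodule.starProjection_eq_self_iff.mpr (LinearMap.mem_range_self _ w)
      have hPjQ : Pj i ∘L Q i = Q i := by
        ext z
        simp only [hQdef, ContinuousLinearMap.comp_apply]
        exact hPjX _
      have hQPj : Q i ∘L Pj i = Q i := by
        have := congrArg ContinuousLinearMap.adjoint hPjQ
        rwa [ContinuousLinearMap.adjoint_comp, (hQsa i).adjoint_eq, (hPjsa i).adjoint_eq]
          at this
      rw [hQPj, hPjQ]
    · -- trace condition
      intro C hC
      have hterm : ∀ i,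
          LinearMap.trace ℂ H
            (((X i ∘L C ∘L ContinuousLinearMap.adjoint (X i)) ∘L Q i : H →L[ℂ] H) :
              H →ₗ[ℂ] H)
          = LinearMap.trace ℂ H ((C ∘L P i : H →L[ℂ] H) : H →ₗ[ℂ] H) := by
        intro i
        have h1 : ((X i ∘L C ∘L ContinuousLinearMap.adjoint (X i)) ∘L Q i : H →L[ℂ] H)
            = X i ∘L (C ∘L ContinuousLinearMap.adjoint (X i) ∘L Q i) := by
          simp only [ContinuousLinearMap.comp_assoc]
        rw [h1, ContinuousLinearMap.toLinearMap_comp, LinearMap.trace_comp_comm']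
        have h2 : ((C ∘L ContinuousLinearMap.adjoint (X i) ∘L Q i : H →L[ℂ] H) : H →ₗ[ℂ] H)
              ∘ₗ ((X i : H →L[ℂ] H) : H →ₗ[ℂ] H)
            = (((C ∘L ContinuousLinearMap.adjoint (X i) ∘L Q i) ∘L X i : H →L[ℂ] H) :
                H →ₗ[ℂ] H) := rfl
        rw [h2]
        congr 1
        rw [← hXQX i]
        simp only [ContinuousLinearMap.comp_assoc]
      rw [Finset.sum_congr rfl (fun i _ => hterm i), ← trace_comp_Lmap U hU2 P C hC, hLP]
      simp
  · -- Reverse direction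
    rintro ⟨Q, hQne, hQprop, htr⟩
    set P : I → (H →L[ℂ] H) := fun i =>
      ContinuousLinearMap.adjoint (X i) ∘L Q i ∘L X i with hPdef
    have hPsa : ∀ i, IsSelfAdjoint (P i) := fun i => (hQprop i).1.adjoint_conj (X i)
    have hterm : ∀ (Cc : H →L[ℂ] H) i,
        LinearMap.trace ℂ H
          (((X i ∘L Cc ∘L ContinuousLinearMap.adjoint (X i)) ∘L Q i : H →L[ℂ] H) :
            H →ₗ[ℂ] H)
        = LinearMap.trace ℂ H ((Cc ∘L P i : H →L[ℂ] H) : H →ₗ[ℂ] H) := by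
      intro Cc i
      have h1 : ((X i ∘L Cc ∘L ContinuousLinearMap.adjoint (X i)) ∘L Q i : H →L[ℂ] H)
          = X i ∘L (Cc ∘L ContinuousLinearMap.adjoint (X i) ∘L Q i) := by
        simp only [ContinuousLinearMap.comp_assoc]
      rw [h1, ContinuousLinearMap.toLinearMap_comp, LinearMap.trace_comp_comm']
      have h2 : ((Cc ∘L ContinuousLinearMap.adjoint (X i) ∘L Q i : H →L[ℂ] H) : H →ₗ[ℂ] H)
            ∘ₗ ((X i : H →L[ℂ] H) : H →ₗ[ℂ] H)
          = (((Cc ∘L ContinuousLinearMap.adjoint (X i) ∘L Q i) ∘L X i : H →L[ℂ] H) :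
              H →ₗ[ℂ] H) := rfl
      rw [h2]
      have h3 : (Cc ∘L ContinuousLinearMap.adjoint (X i) ∘L Q i) ∘L X i = Cc ∘L P i := by
        simp only [hPdef]
        rfl
      rw [h3]
    have hLP : Lmap U P = 0 := by
      have hcomm : ∀ g, Lmap U P ∘L U g = U g ∘L Lmap U P :=
        fun g => (Lmap_commute U hU2 hUm P g).symm
      have h0 := htr (Lmap U P) hcomm
      rw [Finset.sum_congr rfl (fun i _ => hterm (Lmap U P) i),
        ← trace_comp_Lmap U hU2 P (Lmap U P) hcomm] at h0
      apply eq_zero_of_trace_adjoint_comp_self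
      rwa [(Lmap_selfAdjoint U P hPsa).adjoint_eq]
    obtain ⟨i₀, hQi₀⟩ := Function.ne_iff.mp hQne
    have hPne : P ≠ 0 := by
      apply Function.ne_iff.mpr
      refine ⟨i₀, fun hPi0 => hQi₀ ?_⟩
      rw [(hQprop i₀).2]
      apply clm_eq_zero_of_inner
      intro w z
      simp only [ContinuousLinearMap.comp_apply]
      have hsym := (hPjsa i₀).isSymmetric w (Q i₀ (Pj i₀ z))
      simp only [ContinuousLinearMap.coe_coe] at hsym
      rw [← hsym]
      have hmemw : Pj i₀ w ∈ LinearMap.range (X i₀ : H →ₗ[ℂ] H) := by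
        rw [hPj]; exact Submodule.coe_mem _
      have hmemz : Pj i₀ z ∈ LinearMap.range (X i₀ : H →ₗ[ℂ] H) := by
        rw [hPj]; exact Submodule.coe_mem _
      obtain ⟨a, ha⟩ := hmemw
      obtain ⟨b, hb⟩ := hmemz
      rw [← ha, ← hb, ContinuousLinearMap.coe_coe]
      rw [← ContinuousLinearMap.adjoint_inner_right (X i₀) a (Q i₀ (X i₀ b))]
      have : ContinuousLinearMap.adjoint (X i₀) (Q i₀ (X i₀ b)) = P i₀ b := rfl
      rw [this, hPi0]
      simp
    set S : ℝ := ∑ i, ‖Q i‖ with hS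
    have hS0 : 0 ≤ S := Finset.sum_nonneg (fun i _ => norm_nonneg _)
    set ε : ℝ := (1 + S)⁻¹ with hεdef
    have hε : 0 < ε := by
      rw [hεdef]; positivity
    refine ⟨P, hPne, hPsa, ε, hε, ?_⟩
    intro t ht
    rw [Set.mem_Icc] at ht
    have ht' : |t| ≤ ε := abs_le.mpr ht
    constructor
    · intro i
      have hεQ : ε * ‖Q i‖ ≤ 1 := by
        have h1 : ‖Q i‖ ≤ S := Finset.single_le_sum
          (f := fun j => ‖Q j‖) (fun j _ => norm_nonneg _) (Finset.mem_univ i)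
        have h2 : ‖Q i‖ ≤ 1 + S := by linarith
        calc ε * ‖Q i‖ ≤ ε * (1 + S) := by
              exact mul_le_mul_of_nonneg_left h2 (le_of_lt hε)
          _ = 1 := by rw [hεdef]; field_simp
      have happ : ((A + t • P) i) = A i + t • P i := by
        simp [Pi.add_apply, Pi.smul_apply]
      rw [happ]
      constructor
      · exact ContinuousLinearMap.isSelfAdjoint_iff_isSymmetric.mp
            ((hApos i).isSelfAdjoint.add (real_smul_selfAdjoint t (hPsa i)))
      · intro x
        rw [ContinuousLinearMap.reApplyInnerSelf]
        simp only [ContinuousLinearMap.add_apply, inner_add_left, map_add]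
        set u : H := X i x with hu
        have hA_inner : RCLike.re (inner (𝕜 := ℂ) (A i x) x) = ‖u‖ ^ 2 := by
          have h1 : inner (𝕜 := ℂ) (A i x) x = inner (𝕜 := ℂ) u u := by
            rw [hAX]
            simp only [ContinuousLinearMap.comp_apply]
            exact ContinuousLinearMap.adjoint_inner_left (X i) x (X i x)
          rw [h1, inner_self_eq_norm_sq_to_K]
          simp [← Complex.ofReal_pow]
        have hP_inner : inner (𝕜 := ℂ) (P i x) x = inner (𝕜 := ℂ) (Q i u) u := by
          have h1 : P i x = ContinuousLinearMap.adjoint (X i) (Q i u) := rfl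
          rw [h1]
          exact ContinuousLinearMap.adjoint_inner_left (X i) x (Q i u)
        set r : ℝ := RCLike.re (inner (𝕜 := ℂ) (Q i u) u) with hrdef
        have hsm : RCLike.re (inner (𝕜 := ℂ) ((t • P i) x) x) = t * r := by
          rw [ContinuousLinearMap.smul_apply, RCLike.real_smul_eq_coe_smul (K := ℂ),
            inner_smul_left, RCLike.conj_ofReal, RCLike.mul_re]
          simp [hP_inner, hrdef]
        rw [hA_inner, hsm]
        have hrb : |r| ≤ ‖Q i‖ * ‖u‖ ^ 2 := by
          have h1 : |r| ≤ ‖inner (𝕜 := ℂ) (Q i u) u‖ := by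
            rw [hrdef]
            exact RCLike.abs_re_le_norm _
          have h2 : ‖inner (𝕜 := ℂ) (Q i u) u‖ ≤ ‖Q i u‖ * ‖u‖ := norm_inner_le_norm _ _
          have h3 : ‖Q i u‖ ≤ ‖Q i‖ * ‖u‖ := ContinuousLinearMap.le_opNorm _ _
          have h4 : ‖Q i u‖ * ‖u‖ ≤ (‖Q i‖ * ‖u‖) * ‖u‖ :=
            mul_le_mul_of_nonneg_right h3 (norm_nonneg _)
          calc |r| ≤ ‖Q i u‖ * ‖u‖ := le_trans h1 h2
            _ ≤ (‖Q i‖ * ‖u‖) * ‖u‖ := h4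
            _ = ‖Q i‖ * ‖u‖ ^ 2 := by ring
        have htr' : |t * r| ≤ ε * (‖Q i‖ * ‖u‖ ^ 2) :=
          calc |t * r| = |t| * |r| := abs_mul t r
            _ ≤ ε * (‖Q i‖ * ‖u‖ ^ 2) :=
              mul_le_mul ht' hrb (abs_nonneg r) (le_of_lt hε)
        have h5 : ε * (‖Q i‖ * ‖u‖ ^ 2) ≤ ‖u‖ ^ 2 := by
          nlinarith [sq_nonneg ‖u‖, hεQ]
        have h6 := neg_abs_le (t * r)
        linarith
    · rw [Lmap_add, Lmap_real_smul, hALmap, hLP, smul_zero, add_zero]
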